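/- Let E be a real normed vector space, R a normed ring that is a normed ℝ-algebra, and x ∈ E. Let τ, g, h : E → R be differentiable at x, with g y * h y = 1 and h y * g y = 1 for all y ∈ E, and let A : E → (E →L[ℝ] R) be a connection one-form. Define the gauge-transformed connection by A^g x v := g x * (A x v) * h x + g x * (fderiv ℝ h x v). Then for every v ∈ E: fderiv ℝ (fun y => g y * τ y) x v + (A^g x v) * (g x * τ x) = g x * (fderiv ℝ τ x v + (A x v) * τ x); that is, the covariant derivative transforms homogeneously, D^g(g·τ) = g·(Dτ). -/

import Mathlib

/-- Gauge covariance of the covariant derivative, in a local trivialization.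
With pointwise two-sided inverses `g, h : E → R`, connection one-form `A`, and
gauge-transformed connection `A^g x v = g x * (A x v) * h x + g x * (fderiv ℝ h x v)`,
the covariant derivative transforms homogeneously:
`D^g(g·τ) = g·(Dτ)` at the point `x`. -/
theorem gauge_covariance_of_covariant_derivative
    {E R : Type*} [NormedAddCommGroup E] [NormedSpace ℝ E]
    [NormedRing R] [NormedAlgebra ℝ R]
    (x : E) (τ g h : E → R)
    (hτ : DifferentiableAt ℝ τ x)
    (hgd : DifferentiableAt ℝ g x) (hhd : DifferentiableAt ℝ h x)
    (hgh : ∀ y, g y * h y = 1) (hhg : ∀ y, h y * g y = 1)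
    (A : E → E →L[ℝ] R)
    (Ag : E → E → R)
    (hAg : ∀ y v, Ag y v = g y * (A y v) * h y + g y * (fderiv ℝ h y v)) :
    ∀ v : E,
      fderiv ℝ (fun y => g y * τ y) x v + (Ag x v) * (g x * τ x)
        = g x * (fderiv ℝ τ x v + (A x v) * τ x) := by
  intro v
  have hmul : fderiv ℝ (fun y => g y * τ y) x v
      = g x * fderiv ℝ τ x v + fderiv ℝ g x v * τ x := by
    rw [show (fun y => g y * τ y) = g * τ from rfl, fderiv_mul' hgd hτ]; simp
  have hone : fderiv ℝ (fun y => h y * g y) x = 0 := by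
    have : (fun y => h y * g y) = fun _ : E => (1 : R) := funext hhg
    rw [this]; exact fderiv_const_apply 1
  have key : h x * fderiv ℝ g x v + fderiv ℝ h x v * g x = 0 := by
    have := congrArg (fun L : E →L[ℝ] R => L v) ((fderiv_mul' hhd hgd).symm.trans hone)
    simpa using this
  have hkey : fderiv ℝ h x v * g x = -(h x * fderiv ℝ g x v) := by
    exact eq_neg_of_add_eq_zero_right key
  rw [hmul, hAg]
  have e1 : g x * (A x v) * h x * (g x * τ x) = g x * ((A x v) * τ x) := by
    rw [mul_assoc (g x * A x v), ← mul_assoc (h x), hhg x, one_mul, mul_assoc]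
  have e2 : g x * fderiv ℝ h x v * (g x * τ x) = -(fderiv ℝ g x v * τ x) := by
    have hassoc : g x * fderiv ℝ h x v * (g x * τ x)
        = g x * (fderiv ℝ h x v * g x) * τ x := by
      rw [mul_assoc, mul_assoc, mul_assoc]
    rw [hassoc, hkey, mul_neg, neg_mul, ← mul_assoc, hgh x, one_mul]
  rw [add_mul, e1, e2, mul_add]
  abel
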